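/- arXiv:1204.4505 — 4 statements merged into one kernel-verified Lean document; each statement's English description precedes it below -/
import Mathlib

section
/- The 2n-th central-type Catalan identity holds: binom(2n,n) - binom(2n,n-1) = sum over p from 0 to floor(n/2) of (binom(n,p) - binom(n,p-1))^2. -/
/-!
Expanding the squares and applying Vandermonde's identity twice,
`∑ C(n,p)² = C(2n,n)` and `∑ C(n,p) C(n,p-1) = C(2n,n-1)`, gives
`∑_{p=0}^{n+1} d_{n,p}² = 2 (C(2n,n) - C(2n,n-1))`.
By the symmetry of Pascal's triangle `d_{n,n+1-p} = -d_{n,p}`, so this sum is twice its lower half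
`p ≤ ⌊n/2⌋`; for odd `n` the one leftover middle term `d_{n,(n+1)/2}` is zero.
-/

open Finset

/-- `d n p = binom(n,p) - binom(n,p-1)` with `binom(n,-1) = 0`. -/
def dInt (n p : ℕ) : ℤ :=
  (n.choose p : ℤ) - (if p = 0 then 0 else (n.choose (p - 1) : ℤ))

theorem Nat.sum_range_choose_add_mul_choose (n j : ℕ) (hj : j ≤ n) :
    ∑ i ∈ range (n + 1), n.choose (i + j) * n.choose i = (2 * n).choose (n - j) := by
  calc ∑ i ∈ range (n + 1), n.choose (i + j) * n.choose i
      = ∑ i ∈ range (n - j + 1), n.choose (i + j) * n.choose i := by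
        refine (sum_subset (range_subset_range.mpr (by omega)) fun i _ hi => ?_).symm
        rw [mem_range] at hi
        rw [Nat.choose_eq_zero_of_lt (by omega), zero_mul]
    _ = ∑ i ∈ range (n - j + 1), n.choose i * n.choose (n - j - i) := by
        refine sum_congr rfl fun i hi => ?_
        rw [mem_range] at hi
        rw [Nat.choose_symm_of_eq_add (show n = i + j + (n - j - i) by omega), mul_comm]
    _ = (2 * n).choose (n - j) := by
        rw [two_mul, Nat.add_choose_eq, Nat.sum_antidiagonal_eq_sum_range_succ_mk]

/-- For even `m` the middle term `g (m / 2)` vanishes, being equal to its own negative. -/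
theorem Finset.sum_range_sq_eq_two_mul_of_antisymm {R : Type*} [Ring R] [IsAddTorsionFree R]
    (g : ℕ → R) (m : ℕ) (h : ∀ p ≤ m, g (m - p) = -g p) :
    ∑ p ∈ range (m + 1), g p ^ 2 = 2 * ∑ p ∈ range ((m + 1) / 2), g p ^ 2 := by
  set k := (m + 1) / 2
  have upper_half (j : ℕ) (hj : j + k = m + 1) :
      ∑ x ∈ range k, g (j + x) ^ 2 = ∑ x ∈ range k, g x ^ 2 := by
    rw [← sum_range_reflect (fun x => g x ^ 2) k]
    refine sum_congr rfl fun x hx => ?_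
    rw [mem_range] at hx
    rw [show j + x = m - (k - 1 - x) by omega, h _ (by omega), neg_sq]
  rcases Nat.even_or_odd' (m + 1) with ⟨k', hk' | hk'⟩
  · rw [show m + 1 = k + k by omega, sum_range_add, upper_half k (by omega), two_mul]
  · have middle : g k = 0 := by
      rw [← self_eq_neg, ← h k (by omega), show m - k = k by omega]
    rw [show m + 1 = (k + 1) + k by omega, sum_range_add, upper_half (k + 1) (by omega),
      sum_range_succ, middle, zero_pow two_ne_zero, add_zero, two_mul]

@[simp]
theorem dInt_zero (n : ℕ) : dInt n 0 = 1 := by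
  simp [dInt]

theorem dInt_succ (n p : ℕ) : dInt n (p + 1) = n.choose (p + 1) - n.choose p := by
  simp [dInt]

theorem dInt_reflect (n p : ℕ) (hp : p ≤ n + 1) : dInt n (n + 1 - p) = -dInt n p := by
  rcases p with _ | q
  · simp [dInt_succ, Nat.choose_succ_self]
  rcases (show q ≤ n by omega).eq_or_lt with rfl | hq
  · simp [dInt_succ, Nat.choose_succ_self]
  rw [show n + 1 - (q + 1) = (n - q - 1) + 1 by omega, dInt_succ, dInt_succ,
    show n - q - 1 + 1 = n - q by omega, Nat.choose_symm hq.le,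
    Nat.choose_symm_of_eq_add (show n = n - q - 1 + (q + 1) by omega)]
  ring

theorem sum_range_dInt_sq (n : ℕ) (hn : 0 < n) :
    ∑ p ∈ range (n + 2), dInt n p ^ 2 =
      2 * (((2 * n).choose n : ℤ) - (2 * n).choose (n - 1)) := by
  have sum_sq : ∑ i ∈ range (n + 1), (n.choose i : ℤ) ^ 2 = (2 * n).choose n := by
    exact_mod_cast Nat.sum_range_choose_sq n
  have sum_succ_sq : ∑ i ∈ range (n + 1), (n.choose (i + 1) : ℤ) ^ 2 + 1 = (2 * n).choose n := by
    rw [← sum_sq, show (1 : ℤ) = (n.choose 0 : ℤ) ^ 2 by simp,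
      ← sum_range_succ' (fun i => (n.choose i : ℤ) ^ 2), sum_range_succ]
    simp [Nat.choose_succ_self]
  have sum_succ_mul : ∑ i ∈ range (n + 1), (n.choose (i + 1) : ℤ) * n.choose i =
      (2 * n).choose (n - 1) := by
    exact_mod_cast Nat.sum_range_choose_add_mul_choose n 1 hn
  calc ∑ p ∈ range (n + 2), dInt n p ^ 2
      = ∑ i ∈ range (n + 1), ((n.choose (i + 1) : ℤ) - n.choose i) ^ 2 + 1 := by
        simp [sum_range_succ' _ (n + 1), dInt_succ]
    _ = (∑ i ∈ range (n + 1), (n.choose (i + 1) : ℤ) ^ 2 + 1)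
          + ∑ i ∈ range (n + 1), (n.choose i : ℤ) ^ 2
          - 2 * ∑ i ∈ range (n + 1), (n.choose (i + 1) : ℤ) * n.choose i := by
        simp only [sub_sq, sum_add_distrib, sum_sub_distrib, mul_sum, mul_assoc]
        ring
    _ = _ := by
        rw [sum_succ_sq, sum_sq, sum_succ_mul]
        ring

/-- `binom(2n,n) - binom(2n,n-1) = ∑_{p=0}^{⌊n/2⌋} (binom(n,p) - binom(n,p-1))²`. -/
theorem stmt_2 (n : ℕ) (hn : 0 < n) :
    ((2 * n).choose n : ℤ) - ((2 * n).choose (n - 1) : ℤ) =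
      ∑ p ∈ Finset.range (n / 2 + 1), (dInt n p) ^ 2 := by
  have halves := sum_range_sq_eq_two_mul_of_antisymm (dInt n) (n + 1) (dInt_reflect n)
  rw [sum_range_dInt_sq n hn, show (n + 1 + 1) / 2 = n / 2 + 1 by omega] at halves
  linarith
end

section
/- In the abstract Temperley-Lieb algebra, every reduced word u_{i_1} u_{i_2} ... u_{i_k} in the generators contains its maximal index m = max{i_j} exactly once. -/
/-- The defining relations of the Temperley–Lieb algebra with `m` generators
(`TL_n` for `n = m+1`): `uᵢ² = β uᵢ`, `uᵢ u_{i±1} uᵢ = uᵢ` and `uᵢ uⱼ = uⱼ uᵢ`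
for `|i-j| > 1`. -/
inductive TLRel (β : ℂ) (m : ℕ) : FreeAlgebra ℂ (Fin m) → FreeAlgebra ℂ (Fin m) → Prop
  | sq (i : Fin m) :
      TLRel β m (FreeAlgebra.ι ℂ i * FreeAlgebra.ι ℂ i) (β • FreeAlgebra.ι ℂ i)
  | absorb (i j : Fin m) (h : (i : ℕ) + 1 = (j : ℕ) ∨ (j : ℕ) + 1 = (i : ℕ)) :
      TLRel β m (FreeAlgebra.ι ℂ i * FreeAlgebra.ι ℂ j * FreeAlgebra.ι ℂ i)
        (FreeAlgebra.ι ℂ i)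
  | comm (i j : Fin m) (h : (i : ℕ) + 1 < (j : ℕ) ∨ (j : ℕ) + 1 < (i : ℕ)) :
      TLRel β m (FreeAlgebra.ι ℂ i * FreeAlgebra.ι ℂ j)
        (FreeAlgebra.ι ℂ j * FreeAlgebra.ι ℂ i)

/-- The abstract Temperley–Lieb algebra with parameter `β` and `m` generators. -/
abbrev TL (β : ℂ) (m : ℕ) : Type := RingQuot (TLRel β m)

/-- The generator `u_{i+1}` of `TL_{m+1}`. -/
noncomputable def TLgen (β : ℂ) (m : ℕ) (i : Fin m) : TL β m :=
  RingQuot.mkAlgHom ℂ (TLRel β m) (FreeAlgebra.ι ℂ i)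

/-- The element of `TL` represented by a word in the generators. -/
noncomputable def wordProd (β : ℂ) (m : ℕ) (l : List (Fin m)) : TL β m :=
  (l.map (TLgen β m)).prod

/-- A word is reduced if it is not (in the algebra, i.e. using the relations and
scalar factors) a scalar multiple of a word with strictly fewer generators. -/
def Reduced (β : ℂ) (m : ℕ) (l : List (Fin m)) : Prop :=
  ¬ ∃ (l' : List (Fin m)) (c : ℂ),
      l'.length < l.length ∧ wordProd β m l = c • wordProd β m l'

/-!
If the maximal index `i` occurred twice, two consecutive occurrences would enclose a subword
`u_i w u_i` with all letters of `w` below `i`. Such a sandwich always collapses to a scalar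
multiple of a word of length at most `|w| + 1`: letters `< i - 1` commute past `u_i`, so if `w`
contains `u_{i-1}` at most once the relations `u_i² = β u_i` or `u_i u_{i-1} u_i = u_i` apply, and
otherwise two consecutive occurrences of `u_{i-1}` enclose a shorter sandwich of the same kind,
which collapses first. Either way the word was not reduced.
-/

theorem List.exists_eq_append_cons_append_cons_of_two_le_count {α : Type*} [DecidableEq α]
    {a : α} {l : List α} (h : 2 ≤ l.count a) :
    ∃ s t u, l = s ++ a :: t ++ a :: u ∧ a ∉ t := by
  obtain ⟨s, r, has, rfl, -⟩ :=
    List.exists_erase_eq (List.count_pos_iff.mp (by omega : 0 < l.count a))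
  have har : a ∈ r := List.count_pos_iff.mp <| by
    simp only [List.count_append, List.count_cons_self, List.count_eq_zero_of_not_mem has] at h
    omega
  obtain ⟨t, u, hat, rfl, -⟩ := List.exists_erase_eq har
  exact ⟨s, t, u, by simp, hat⟩

section

variable {β : ℂ} {m : ℕ}

@[simp]
theorem wordProd_nil : wordProd β m [] = 1 := rfl

@[simp]
theorem wordProd_cons (i : Fin m) (w : List (Fin m)) :
    wordProd β m (i :: w) = TLgen β m i * wordProd β m w := by
  simp [wordProd]

@[simp]
theorem wordProd_append (v w : List (Fin m)) :
    wordProd β m (v ++ w) = wordProd β m v * wordProd β m w := by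
  simp [wordProd]

theorem TLgen_mul_self (i : Fin m) : TLgen β m i * TLgen β m i = β • TLgen β m i := by
  simpa only [map_mul, map_smul, TLgen] using RingQuot.mkAlgHom_rel ℂ (TLRel.sq (β := β) i)

theorem TLgen_mul_TLgen_mul_TLgen_of_succ_eq {i j : Fin m} (h : (j : ℕ) + 1 = i) :
    TLgen β m i * TLgen β m j * TLgen β m i = TLgen β m i := by
  simpa only [map_mul, TLgen] using RingQuot.mkAlgHom_rel ℂ (TLRel.absorb (β := β) i j (.inr h))

theorem commute_TLgen_of_succ_lt {i j : Fin m} (h : (j : ℕ) + 1 < i) :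
    Commute (TLgen β m i) (TLgen β m j) := commute_iff_eq _ _ |>.mpr <| by
  simpa only [map_mul, TLgen] using RingQuot.mkAlgHom_rel ℂ (TLRel.comm (β := β) i j (.inr h))

theorem commute_TLgen_wordProd {i : Fin m} {w : List (Fin m)} (h : ∀ j ∈ w, (j : ℕ) + 1 < i) :
    Commute (TLgen β m i) (wordProd β m w) :=
  Commute.list_prod_right _ _ fun _ hx ↦ by
    obtain ⟨j, hj, rfl⟩ := List.mem_map.mp hx
    exact commute_TLgen_of_succ_lt (h j hj)

theorem wordProd_append_append_eq_smul {v v' : List (Fin m)} {c : ℂ}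
    (h : wordProd β m v = c • wordProd β m v') (s u : List (Fin m)) :
    wordProd β m (s ++ v ++ u) = c • wordProd β m (s ++ v' ++ u) := by
  simp only [wordProd_append, h, mul_smul_comm, smul_mul_assoc]

theorem wordProd_sandwich_of_forall_succ_lt {i : Fin m} {w : List (Fin m)}
    (hw : ∀ j ∈ w, (j : ℕ) + 1 < i) :
    wordProd β m (i :: w ++ [i]) = β • wordProd β m (w ++ [i]) :=
  calc wordProd β m (i :: w ++ [i])
    _ = wordProd β m w * (TLgen β m i * TLgen β m i) := by
      simp [← mul_assoc, (commute_TLgen_wordProd hw).eq]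
    _ = β • wordProd β m (w ++ [i]) := by simp [TLgen_mul_self]

theorem wordProd_sandwich_of_succ_eq {i x : Fin m} (hx : (x : ℕ) + 1 = i) {a b : List (Fin m)}
    (ha : ∀ j ∈ a, (j : ℕ) + 1 < i) (hb : ∀ j ∈ b, (j : ℕ) + 1 < i) :
    wordProd β m (i :: (a ++ x :: b) ++ [i]) = wordProd β m (a ++ i :: b) :=
  calc wordProd β m (i :: (a ++ x :: b) ++ [i])
    _ = TLgen β m i * wordProd β m a * TLgen β m x * (wordProd β m b * TLgen β m i) := by
      simp [mul_assoc]
    _ = wordProd β m a * (TLgen β m i * TLgen β m x * TLgen β m i) * wordProd β m b := by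
      rw [(commute_TLgen_wordProd ha).eq, ← (commute_TLgen_wordProd hb).eq]
      simp only [mul_assoc]
    _ = wordProd β m (a ++ i :: b) := by
      simp [TLgen_mul_TLgen_mul_TLgen_of_succ_eq hx, mul_assoc]

theorem exists_wordProd_sandwich_eq_smul (w : List (Fin m)) (i : Fin m) (hw : ∀ j ∈ w, j < i) :
    ∃ (c : ℂ) (w' : List (Fin m)), w'.length ≤ w.length + 1 ∧ (∀ j ∈ w', j ≤ i) ∧
      wordProd β m (i :: w ++ [i]) = c • wordProd β m w' := by
  induction hn : w.length using Nat.strong_induction_on generalizing w i with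
  | _ n ih =>
  subst hn
  by_cases hfar : ∀ j ∈ w, (j : ℕ) + 1 < i
  · refine ⟨β, w ++ [i], by simp, ?_, wordProd_sandwich_of_forall_succ_lt hfar⟩
    simp only [List.forall_mem_append, List.forall_mem_singleton]
    exact ⟨fun j hj ↦ (hw j hj).le, le_rfl⟩
  push Not at hfar
  obtain ⟨x, hxw, hx⟩ := hfar
  have hxi : (x : ℕ) + 1 = i := by have := hw x hxw; omega
  have hfar_of_notMem {l : List (Fin m)} (hl : ∀ j ∈ l, j < i) (hxl : x ∉ l) :
      ∀ j ∈ l, (j : ℕ) + 1 < i := fun j hj ↦ by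
    have := hl j hj; have : j ≠ x := by rintro rfl; exact hxl hj
    omega
  obtain ⟨a, b, hxa, rfl, -⟩ := List.exists_erase_eq hxw
  simp only [List.forall_mem_append, List.forall_mem_cons] at hw
  obtain ⟨ha, hx_lt, hb⟩ := hw
  by_cases hxb : x ∉ b
  · refine ⟨1, a ++ i :: b, by simp, ?_, ?_⟩
    · simp only [List.forall_mem_append, List.forall_mem_cons]
      exact ⟨fun j hj ↦ (ha j hj).le, le_rfl, fun j hj ↦ (hb j hj).le⟩
    · rw [one_smul, wordProd_sandwich_of_succ_eq hxi (hfar_of_notMem ha hxa)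
        (hfar_of_notMem hb hxb)]
  rw [not_not] at hxb
  obtain ⟨a', b', hxa', rfl, -⟩ := List.exists_erase_eq hxb
  simp only [List.forall_mem_append, List.forall_mem_cons] at hb
  obtain ⟨ha', -, hb'⟩ := hb
  obtain ⟨c₁, v, hv, hvx, hc₁⟩ := ih a'.length (by simp; omega) a' x
    (fun j hj ↦ by have := hfar_of_notMem ha' hxa' j hj; omega) rfl
  have hv_lt : ∀ j ∈ a ++ v ++ b', j < i := by
    simp only [List.forall_mem_append]
    exact ⟨⟨ha, fun j hj ↦ (hvx j hj).trans_lt hx_lt⟩, hb'⟩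
  obtain ⟨c₂, w', hw', hw'i, hc₂⟩ :=
    ih (a ++ v ++ b').length (by simp; omega) (a ++ v ++ b') i hv_lt rfl
  refine ⟨c₁ * c₂, w', by simp at hv hw' ⊢; omega, hw'i, ?_⟩
  calc wordProd β m (i :: (a ++ x :: (a' ++ x :: b')) ++ [i])
      _ = wordProd β m ((i :: a) ++ (x :: a' ++ [x]) ++ (b' ++ [i])) := by simp
      _ = c₁ • wordProd β m ((i :: a) ++ v ++ (b' ++ [i])) :=
        wordProd_append_append_eq_smul hc₁ _ _
      _ = c₁ • wordProd β m (i :: (a ++ v ++ b') ++ [i]) := by simp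
      _ = (c₁ * c₂) • wordProd β m w' := by rw [hc₂, smul_smul]

end

/-- In any reduced Temperley–Lieb word, the maximal index occurs exactly once. -/
theorem stmt_4 (β : ℂ) (m : ℕ) (l : List (Fin m)) (hred : Reduced β m l)
    (i : Fin m) (hi : i ∈ l) (hmax : ∀ j ∈ l, j ≤ i) :
    l.count i = 1 := by
  by_contra hne
  obtain ⟨s, w, u, rfl, hiw⟩ := List.exists_eq_append_cons_append_cons_of_two_le_count
    (by have := List.count_pos_iff.mpr hi; omega : 2 ≤ l.count i)
  have hw : ∀ j ∈ w, j < i := fun j hj ↦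
    lt_of_le_of_ne (hmax j (by simp [hj])) (by rintro rfl; exact hiw hj)
  obtain ⟨c, w', hlen, -, heq⟩ := exists_wordProd_sandwich_eq_smul (β := β) w i hw
  refine hred ⟨s ++ w' ++ u, c, by simp; omega, ?_⟩
  simpa using wordProd_append_append_eq_smul heq s u
end

section
/- For q in C not 0 and not a root of unity, with [m] = (q^m - q^{-m})/(q - q^{-1}) and d_{n,p} = binom(n,p) - binom(n,p-1), the quantity D_{n,p} = prod_{j=1}^{p} ([n-2p+1+j]/[j])^{d_{n,p-j}} satisfies the recursion D_{n,p} = ([n-2p+2]/[n-2p+1])^{d_{n-1,p-1}} * D_{n-1,p} * D_{n-1,p-1}, with D_{n,0} = 1 and D_{2p-1,p} = 1. -/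
/-!
Reindex `D_{n,p}` by `k = p - j`, so that `D_{n,p} = ∏_{k<p} ([n-p+1-k]/[p-k])^{d_{n,k}}`.
Pascal's rule `d_{n+1,k+1} = d_{n,k+1} + d_{n,k}` (valid while `2k < n`) splits `D_{n+1,p+1}`
into two products. The factor `[n-p+1-k]/[p+1-k]` of the first is `[n-p+1-k]/[n-p-k]` times a
factor of `D_{n,p+1}`; the factor `[n-p-k]/[p-k]` of the second is the inverse of the same ratio
times a factor of `D_{n,p}`. These ratios cancel except for `k = p`, which leaves
`([n-2p+1]/[n-2p])^{d_{n,p}}`. The identity thus holds for any sequence of nonzero `[m]`, `m > 0`;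
for q-numbers `[m] ≠ 0` because `q^{2m} ≠ 1`.
-/

open scoped Classical

/-- The `q`-number `[m] = (q^m - q^{-m})/(q - q⁻¹)`, with `[m] = m q^{m-1}`
when `q = ±1`. -/
noncomputable def qnum (q : ℂ) (m : ℤ) : ℂ :=
  if q = 1 ∨ q = -1 then (m : ℂ) * q ^ (m - 1)
  else (q ^ m - q ^ (-m)) / (q - q⁻¹)

/-- `d_{n,p} = binom(n,p) - binom(n,p-1)`, with `binom(n,-1) = 0`. -/
def dd (n k : ℕ) : ℕ := n.choose k - (if k = 0 then 0 else n.choose (k - 1))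

/-- The Gram determinant `D_{n,p} = ∏_{j=1}^p ([n-2p+1+j]/[j])^{d_{n,p-j}}`. -/
noncomputable def Ddet (q : ℂ) (n p : ℕ) : ℂ :=
  ∏ j ∈ Finset.Icc 1 p,
    (qnum q ((n : ℤ) - 2 * p + 1 + (j : ℤ)) / qnum q (j : ℤ)) ^ (dd n (p - j))

open Finset

lemma zpow_ne_one_of_pow_ne_one {G₀ : Type*} [GroupWithZero G₀] {q : G₀}
    (hroot : ∀ k : ℕ, 0 < k → q ^ k ≠ 1) {m : ℤ} (hm : m ≠ 0) : q ^ m ≠ 1 := by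
  have hk : 0 < m.natAbs := Int.natAbs_pos.2 hm
  rcases Int.natAbs_eq m with h | h <;> rw [h]
  · rw [zpow_natCast]
    exact hroot _ hk
  · rw [zpow_neg, zpow_natCast, Ne, inv_eq_one]
    exact hroot _ hk

lemma qnum_ne_zero {q : ℂ} (hq : q ≠ 0) (hroot : ∀ k : ℕ, 0 < k → q ^ k ≠ 1) {m : ℤ}
    (hm : m ≠ 0) : qnum q m ≠ 0 := by
  have hsub : ∀ m : ℤ, m ≠ 0 → q ^ m - q ^ (-m) ≠ 0 := fun m hm h ↦
    zpow_ne_one_of_pow_ne_one hroot (mul_ne_zero two_ne_zero hm) <| by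
      rw [two_mul, zpow_add₀ hq]
      nth_rw 2 [sub_eq_zero.1 h]
      rw [← zpow_add₀ hq, add_neg_cancel, zpow_zero]
  have hpm : ¬(q = 1 ∨ q = -1) := by
    rintro (rfl | rfl)
    exacts [hroot 1 one_pos (one_pow 1), hroot 2 two_pos (by norm_num)]
  rw [qnum, if_neg hpm]
  refine div_ne_zero (hsub m hm) ?_
  simpa only [zpow_one, zpow_neg] using hsub 1 one_ne_zero

lemma Nat.choose_le_choose_succ_of_two_mul_lt {n k : ℕ} (h : 2 * k < n) :
    n.choose k ≤ n.choose (k + 1) := by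
  refine Nat.le_of_mul_le_mul_right ?_ k.succ_pos
  rw [Nat.choose_succ_right_eq]
  exact Nat.mul_le_mul_left _ (by omega)

lemma dd_zero (n : ℕ) : dd n 0 = 1 := by simp [dd]

lemma dd_succ_succ {n k : ℕ} (h : 2 * k < n) : dd (n + 1) (k + 1) = dd n (k + 1) + dd n k := by
  rcases k with _ | j
  · simp only [dd, zero_add, Nat.choose_one_right, Nat.choose_zero_right, one_ne_zero,
      ↓reduceIte, tsub_self, add_tsub_cancel_right, tsub_zero]
    omega
  · have h₁ := Nat.choose_le_choose_succ_of_two_mul_lt (n := n) (k := j) (by omega)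
    have h₂ := Nat.choose_le_choose_succ_of_two_mul_lt (n := n) (k := j + 1) (by omega)
    simp only [dd, Nat.choose_succ_succ', add_eq_zero, one_ne_zero, and_false, if_false,
      Nat.add_sub_cancel]
    omega

lemma prod_range_succ_pow_mul_prod_range_inv_pow {G₀ : Type*} [CommGroupWithZero G₀]
    (r : ℕ → G₀) (e : ℕ → ℕ) {p : ℕ} (hr : ∀ k < p, r k ≠ 0) :
    (∏ k ∈ range (p + 1), r k ^ e k) * ∏ k ∈ range p, (r k)⁻¹ ^ e k = r p ^ e p := by
  rw [prod_range_succ, mul_right_comm, ← prod_mul_distrib, prod_eq_one, one_mul]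
  intro k hk
  rw [inv_pow, mul_inv_cancel₀ (pow_ne_zero _ (hr k (mem_range.1 hk)))]

section gramProduct

variable {K : Type*} [CommGroupWithZero K] (a : ℤ → K)

def gramProduct (n p : ℕ) : K :=
  ∏ k ∈ range p, (a (n - p + 1 - k) / a (p - k)) ^ dd n k

lemma gramProduct_succ_succ (ha : ∀ m : ℤ, 0 < m → a m ≠ 0) {n p : ℕ} (h : 2 * p < n) :
    gramProduct a (n + 1) (p + 1) =
      (a (n - 2 * p + 1) / a (n - 2 * p)) ^ dd n p * gramProduct a n (p + 1) *
        gramProduct a n p := by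
  have hsplit : gramProduct a (n + 1) (p + 1) =
      (∏ k ∈ range (p + 1), (a (n - p + 1 - k) / a (p + 1 - k)) ^ dd n k) *
        ∏ k ∈ range p, (a (n - p - k) / a (p - k)) ^ dd n k := by
    rw [gramProduct, prod_range_succ', prod_range_succ', mul_right_comm, ← prod_mul_distrib]
    congr 1
    · refine prod_congr rfl fun k hk ↦ ?_
      rw [dd_succ_succ (by have := mem_range.1 hk; omega), pow_add]
      congr 2 <;> push_cast <;> ring_nf
    · rw [dd_zero, dd_zero]
      congr 2
      push_cast
      ring_nf
  have hfirst : ∏ k ∈ range (p + 1), (a (n - p + 1 - k) / a (p + 1 - k)) ^ dd n k =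
      (∏ k ∈ range (p + 1), (a (n - p + 1 - k) / a (n - p - k)) ^ dd n k) *
        gramProduct a n (p + 1) := by
    rw [gramProduct, ← prod_mul_distrib]
    refine prod_congr rfl fun k hk ↦ ?_
    rw [← mul_pow, show (n : ℤ) - (p + 1 : ℕ) + 1 - k = n - p - k by push_cast; ring,
      div_mul_div_cancel₀ (ha _ (by have := mem_range.1 hk; omega)), Nat.cast_succ]
  have hsecond : ∏ k ∈ range p, (a (n - p - k) / a (p - k)) ^ dd n k =
      (∏ k ∈ range p, (a (n - p + 1 - k) / a (n - p - k))⁻¹ ^ dd n k) * gramProduct a n p := by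
    rw [gramProduct, ← prod_mul_distrib]
    refine prod_congr rfl fun k hk ↦ ?_
    rw [← mul_pow, inv_div, div_mul_div_cancel₀ (ha _ (by have := mem_range.1 hk; omega))]
  rw [hsplit, hfirst, hsecond, mul_mul_mul_comm,
    prod_range_succ_pow_mul_prod_range_inv_pow _ _ fun k hk ↦
      div_ne_zero (ha _ (by omega)) (ha _ (by omega)), ← mul_assoc,
    show (n : ℤ) - p + 1 - p = n - 2 * p + 1 by ring, show (n : ℤ) - p - p = n - 2 * p by ring]

end gramProduct

lemma Ddet_eq_gramProduct (q : ℂ) (n p : ℕ) : Ddet q n p = gramProduct (qnum q) n p := by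
  have hreflect := prod_Ico_reflect (fun j ↦
    (qnum q ((n : ℤ) - 2 * p + 1 + (j : ℤ)) / qnum q (j : ℤ)) ^ (dd n (p - j))) 0 p.le_succ
  rw [Nat.add_sub_cancel_left, Nat.sub_zero, Ico_add_one_right_eq_Icc] at hreflect
  rw [Ddet, ← hreflect, Nat.Ico_zero_eq_range]
  refine prod_congr rfl fun k hk ↦ ?_
  have hkp : k ≤ p := (mem_range.1 hk).le
  rw [Nat.sub_sub_self hkp, Nat.cast_sub hkp]
  congr 3
  ring

/-- For `q` neither zero nor a root of unity, the Gram determinants satisfy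
`D_{n,p} = ([n-2p+2]/[n-2p+1])^{d_{n-1,p-1}} D_{n-1,p} D_{n-1,p-1}`, with
`D_{n,0} = 1` and `D_{2p-1,p} = 1`. -/
theorem stmt_8 (q : ℂ) (hq : q ≠ 0) (hroot : ∀ k : ℕ, 0 < k → q ^ k ≠ 1) :
    (∀ n : ℕ, Ddet q n 0 = 1) ∧
    (∀ p : ℕ, 1 ≤ p → Ddet q (2 * p - 1) p = 1) ∧
    (∀ n p : ℕ, 1 ≤ n → 1 ≤ p → 2 * p ≤ n →
      Ddet q n p =
        (qnum q ((n : ℤ) - 2 * p + 2) / qnum q ((n : ℤ) - 2 * p + 1)) ^ (dd (n - 1) (p - 1)) *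
          Ddet q (n - 1) p * Ddet q (n - 1) (p - 1)) := by
  have hqnum : ∀ m : ℤ, 0 < m → qnum q m ≠ 0 := fun m hm ↦ qnum_ne_zero hq hroot hm.ne'
  refine ⟨fun n ↦ by simp [Ddet], fun p hp ↦ prod_eq_one fun j hj ↦ ?_, fun n p hn hp hpn ↦ ?_⟩
  · have hj := mem_Icc.1 hj
    rw [show ((2 * p - 1 : ℕ) : ℤ) - 2 * p + 1 + j = j by omega, div_self (hqnum _ (by omega)),
      one_pow]
  · obtain ⟨n, rfl⟩ : ∃ n', n = n' + 1 := ⟨n - 1, by omega⟩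
    obtain ⟨p, rfl⟩ : ∃ p', p = p' + 1 := ⟨p - 1, by omega⟩
    simp only [Nat.add_sub_cancel, Ddet_eq_gramProduct]
    rw [gramProduct_succ_succ _ hqnum (by omega)]
    push_cast
    ring_nf
end

section
/- Under the hypotheses of the previous abstraction (module V over an algebra A with non-zero invariant form and elements w(x,y) in A satisfying w(x,y)z = <y,z>x), every A-module endomorphism of V is a scalar multiple of the identity. -/
/-!
If `w ∈ A` acts on `V` as the rank-one operator `z ↦ B y z • x`, then any `A`-linear `φ`
commutes with it, which gives `B y z • φ x = B y (φ z) • x`. Choosing `y, z` with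
`B y z ≠ 0` shows that `φ x` is the same multiple `B y (φ z) / B y z` of `x` for every `x`.
-/

theorem LinearMap.smul_apply_eq_of_smul_eq_rankOne {K A V : Type*} [CommSemiring K]
    [Semiring A] [Algebra K A] [AddCommMonoid V] [Module K V] [Module A V]
    [IsScalarTower K A V] (φ : V →ₗ[A] V) (B : V →ₗ[K] V →ₗ[K] K)
    {w : A} {x y : V} (hw : ∀ z, w • z = B y z • x) (z : V) :
    B y z • φ x = B y (φ z) • x := by
  rw [← hw, ← φ.map_smul_of_tower, ← hw, φ.map_smul]

theorem LinearMap.exists_eq_smul_of_forall_rankOne {K A V : Type*} [Field K] [Semiring A]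
    [Algebra K A] [AddCommMonoid V] [Module K V] [Module A V] [IsScalarTower K A V]
    (B : V →ₗ[K] V →ₗ[K] K)
    (hnz : ∃ u v : V, B u v ≠ 0) (hrankOne : ∀ x y : V, ∃ w : A, ∀ z, w • z = B y z • x)
    (φ : V →ₗ[A] V) : ∃ c : K, ∀ x, φ x = c • x := by
  obtain ⟨y, z, hyz⟩ := hnz
  refine ⟨(B y z)⁻¹ * B y (φ z), fun x => ?_⟩
  obtain ⟨w, hw⟩ := hrankOne x y
  rw [mul_smul, ← φ.smul_apply_eq_of_smul_eq_rankOne B hw z, inv_smul_smul₀ hyz]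

theorem stmt_17_general (A : Type*) [Ring A] [Algebra ℂ A]
    (V : Type*) [AddCommGroup V] [Module ℂ V] [Module A V] [IsScalarTower ℂ A V]
    (B : V →ₗ[ℂ] V →ₗ[ℂ] ℂ)
    (hnz : ∃ u v : V, B u v ≠ 0)
    (hmagic : ∀ u v : V, ∃ w : A, ∀ z : V, w • z = B v z • u) :
    ∀ φ : V →ₗ[A] V, ∃ c : ℂ, ∀ v : V, φ v = c • v :=
  LinearMap.exists_eq_smul_of_forall_rankOne B hnz hmagic

/-- Under the same hypotheses as the previous abstraction (a module `V` over a
finite-dimensional `ℂ`-algebra `A` with a symmetric invariant bilinear form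
that is not identically zero, satisfying the magic identity
`w(x,y) • z = B y z • x`), every `A`-module endomorphism of `V` is a scalar
multiple of the identity. -/
theorem stmt_17 (A : Type*) [Ring A] [Algebra ℂ A] [FiniteDimensional ℂ A]
    (V : Type*) [AddCommGroup V] [Module ℂ V] [Module A V] [IsScalarTower ℂ A V]
    (B : V →ₗ[ℂ] V →ₗ[ℂ] ℂ)
    (hsymm : ∀ u v : V, B u v = B v u)
    (hnz : ∃ u v : V, B u v ≠ 0)
    (σ : A → A)
    (hinv : ∀ (a : A) (u v : V), B u (a • v) = B (σ a • u) v)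
    (hmagic : ∀ u v : V, ∃ w : A, ∀ z : V, w • z = B v z • u) :
    ∀ φ : V →ₗ[A] V, ∃ c : ℂ, ∀ v : V, φ v = c • v :=
  stmt_17_general A V B hnz hmagic
end
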